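/- If G is a weighted tree and p, q > 1 satisfy 1/p + 1/q = 1, then the effective p-resistance satisfies r_{G,p}(i,j) = ‖L⁺e_i − L⁺e_j‖_{G,q}^p exactly for all vertices i, j. -/

import Mathlib

open Matrix Finset

/-- `Mp` is the Moore–Penrose pseudoinverse of `M` (the four Penrose conditions). -/
def IsMoorePenrose {α β : Type*} [Fintype α] [Fintype β]
    (M : Matrix α β ℝ) (Mp : Matrix β α ℝ) : Prop :=
  M * Mp * M = M ∧ Mp * M * Mp = Mp ∧ (M * Mp)ᵀ = M * Mp ∧ (Mp * M)ᵀ = Mp * M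

/-- An undirected weighted graph on `n` vertices with `m` edges, given by the two
endpoints `s ℓ ≠ t ℓ` and a positive weight `w ℓ` of each edge. -/
structure WGraph (n m : ℕ) where
  s : Fin m → Fin n
  t : Fin m → Fin n
  w : Fin m → ℝ
  w_pos : ∀ ℓ, 0 < w ℓ
  s_ne_t : ∀ ℓ, s ℓ ≠ t ℓ

namespace WGraph

variable {n m : ℕ}

/-- The (signed) incidence matrix `C ∈ ℝ^{m×n}` of the graph. -/
def inc (G : WGraph n m) : Matrix (Fin m) (Fin n) ℝ :=
  fun ℓ i => if i = G.s ℓ then 1 else if i = G.t ℓ then -1 else 0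

/-- The graph Laplacian `L = Cᵀ W C`. -/
def lap (G : WGraph n m) : Matrix (Fin n) (Fin n) ℝ :=
  (G.inc)ᵀ * Matrix.diagonal G.w * G.inc

/-- Connectedness, expressed as: the kernel of the incidence matrix consists
exactly of the constant vectors. -/
def Connected (G : WGraph n m) : Prop :=
  ∀ x : Fin n → ℝ, G.inc.mulVec x = 0 → ∃ c : ℝ, ∀ i, x i = c

/-- The graph `p`-seminorm `‖x‖_{G,p} = (∑_ℓ w_ℓ |(Cx)_ℓ|^p)^{1/p}
  (= (∑_{ij} a_{ij} |x_i − x_j|^p)^{1/p})`. -/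
noncomputable def gnorm (G : WGraph n m) (p : ℝ) (x : Fin n → ℝ) : ℝ :=
  (∑ ℓ, G.w ℓ * |G.inc.mulVec x ℓ| ^ p) ^ (1 / p)

/-- The effective `p`-resistance
`r_{G,p}(i,j) = (min { S_{G,p}(x) : x_i − x_j = 1 })⁻¹`. -/
noncomputable def presistance (G : WGraph n m) (p : ℝ) (i j : Fin n) : ℝ :=
  (sInf {e : ℝ | ∃ x : Fin n → ℝ, x i - x j = 1 ∧
      e = ∑ ℓ, G.w ℓ * |G.inc.mulVec x ℓ| ^ p})⁻¹

end WGraph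

/-- The (unweighted) ℓ^p norm on `ι → ℝ`. -/
noncomputable def pnorm {ι : Type*} [Fintype ι] (p : ℝ) (x : ι → ℝ) : ℝ :=
  (∑ i, |x i| ^ p) ^ (1 / p)

/-- The operator `p`-norm `⦀M⦀_p = sup_{x ≠ 0} ‖Mx‖_p / ‖x‖_p`. -/
noncomputable def opNorm {ι κ : Type*} [Fintype ι] [Fintype κ] (p : ℝ)
    (M : Matrix ι κ ℝ) : ℝ :=
  sSup {t : ℝ | ∃ x : κ → ℝ, x ≠ 0 ∧ t = pnorm p (M.mulVec x) / pnorm p x}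

/-!
Put `b = eᵢ - eⱼ` and `y = L⁺b`. Since `b` is orthogonal to the kernel of `L` (the constants),
`Ly = b`, so `xᵢ - xⱼ = ∑_ℓ w_ℓ (Cx)_ℓ (Cy)_ℓ` for every potential `x`. Hölder's inequality for
the weights `w` then gives `∑_ℓ w_ℓ |(Cx)_ℓ|^p ≥ K^{1-p}` whenever `xᵢ - xⱼ = 1`, where
`K = ‖y‖_{G,q}^q`. On a tree `C` is onto the edge space, so the edge vector
`u = K⁻¹ (Cy)|Cy|^{q-2}`, which gives equality in Hölder's inequality, is of the form `Cx`.
Hence the minimum is `K^{1-p}` and `r_{G,p}(i,j) = K^{p-1} = ‖y‖_{G,q}^p`.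
-/

lemma IsMoorePenrose.mulVec_mulVec_eq_self {α : Type*} [Fintype α] {M Mp : Matrix α α ℝ}
    (h : IsMoorePenrose M Mp) (hM : Mᵀ = M) {b : α → ℝ}
    (hb : ∀ z, M *ᵥ z = 0 → b ⬝ᵥ z = 0) : M *ᵥ (Mp *ᵥ b) = b := by
  obtain ⟨hMMpM, -, hMMp, -⟩ := h
  have hMMMp : M * M * Mp = M := by
    rw [Matrix.mul_assoc]
    simpa only [transpose_mul, hMMp, hM] using congrArg transpose hMMpM
  set z := b - M *ᵥ (Mp *ᵥ b)
  have hz : M *ᵥ z = 0 := by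
    rw [mulVec_sub, mulVec_mulVec, mulVec_mulVec, hMMMp, sub_self]
  have hzz : z ⬝ᵥ z = 0 := by
    rw [dotProduct_sub, dotProduct_comm z b, hb z hz, dotProduct_mulVec, ← mulVec_transpose, hM,
      hz, zero_dotProduct, sub_zero]
  exact (sub_eq_zero.mp (dotProduct_self_eq_zero.mp hzz)).symm

section WeightedHolder

variable {ι : Type*} [Fintype ι] {p q : ℝ}

lemma mul_mul_abs_rpow_sub_two (a : ℝ) (hq : q ≠ 0) : a * (a * |a| ^ (q - 2)) = |a| ^ q := by
  rcases eq_or_ne a 0 with rfl | ha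
  · simp [Real.zero_rpow hq]
  · have habs : 0 < |a| := abs_pos.2 ha
    calc a * (a * |a| ^ (q - 2)) = |a| ^ (2 : ℝ) * |a| ^ (q - 2) := by
          rw [Real.rpow_two, sq_abs]; ring
      _ = |a| ^ q := by rw [← Real.rpow_add habs]; ring_nf

lemma abs_mul_abs_rpow_sub_two_rpow (a : ℝ) (hpq : p.HolderConjugate q) :
    |a * |a| ^ (q - 2)| ^ p = |a| ^ q := by
  rcases eq_or_ne a 0 with rfl | ha
  · simp [Real.zero_rpow hpq.ne_zero, Real.zero_rpow hpq.symm.ne_zero]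
  · have habs : 0 < |a| := abs_pos.2 ha
    rw [abs_mul, abs_of_pos (Real.rpow_pos_of_pos habs _),
      ← Real.rpow_one_add' habs.le (by linarith [hpq.symm.sub_one_pos]), ← Real.rpow_mul habs.le,
      show 1 + (q - 2) = q - 1 by ring, hpq.symm.sub_one_mul_conj]

lemma abs_rpow_one_div_mul_rpow {w : ℝ} (hw : 0 ≤ w) (a : ℝ) {r : ℝ} (hr : r ≠ 0) :
    |w ^ (1 / r) * a| ^ r = w * |a| ^ r := by
  rw [abs_mul, Real.mul_rpow (abs_nonneg _) (abs_nonneg _), abs_of_nonneg (Real.rpow_nonneg hw _),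
    ← Real.rpow_mul hw, one_div_mul_cancel hr, Real.rpow_one]

lemma inner_le_weighted_Lp_mul_Lq (hpq : p.HolderConjugate q) {w : ι → ℝ} (hw : ∀ k, 0 ≤ w k)
    (u v : ι → ℝ) :
    ∑ k, w k * u k * v k ≤
      (∑ k, w k * |u k| ^ p) ^ (1 / p) * (∑ k, w k * |v k| ^ q) ^ (1 / q) := by
  have hsplit : ∀ k, w k * u k * v k = (w k ^ (1 / p) * u k) * (w k ^ (1 / q) * v k) := fun k => by
    rw [mul_mul_mul_comm, ← Real.rpow_add' (hw k) (by rw [hpq.one_div_add_one_div]; simp),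
      hpq.one_div_add_one_div, div_one, Real.rpow_one, mul_assoc]
  simpa only [hsplit, abs_rpow_one_div_mul_rpow (hw _) _ hpq.ne_zero,
    abs_rpow_one_div_mul_rpow (hw _) _ hpq.symm.ne_zero] using
    Real.inner_le_Lp_mul_Lq univ (fun k => w k ^ (1 / p) * u k) (fun k => w k ^ (1 / q) * v k) hpq

lemma sum_weight_abs_rpow_pos_of_sum_weight_mul_mul_eq_one (hpq : p.HolderConjugate q)
    {w : ι → ℝ} (hw : ∀ k, 0 ≤ w k) {u v : ι → ℝ} (huv : ∑ k, w k * u k * v k = 1) :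
    0 < ∑ k, w k * |v k| ^ q := by
  have hholder := inner_le_weighted_Lp_mul_Lq hpq hw u v
  refine (sum_nonneg fun k _ => mul_nonneg (hw k) (by positivity)).lt_of_ne fun hK => ?_
  rw [huv, ← hK, Real.zero_rpow hpq.symm.one_div_ne_zero, mul_zero] at hholder
  exact one_pos.not_ge hholder

lemma rpow_one_sub_le_sum_weight_abs_rpow (hpq : p.HolderConjugate q) {w : ι → ℝ}
    (hw : ∀ k, 0 ≤ w k) {u v : ι → ℝ} (huv : ∑ k, w k * u k * v k = 1) :
    (∑ k, w k * |v k| ^ q) ^ (1 - p) ≤ ∑ k, w k * |u k| ^ p := by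
  set S := ∑ k, w k * |u k| ^ p
  set K := ∑ k, w k * |v k| ^ q
  have hS : 0 ≤ S := sum_nonneg fun k _ => mul_nonneg (hw k) (by positivity)
  have hK : 0 < K := sum_weight_abs_rpow_pos_of_sum_weight_mul_mul_eq_one hpq hw huv
  have hholder : 1 ≤ S * K ^ (p - 1) := by
    have h := Real.one_le_rpow (huv ▸ inner_le_weighted_Lp_mul_Lq hpq hw u v) hpq.nonneg
    rwa [Real.mul_rpow (by positivity) (by positivity), ← Real.rpow_mul hS, ← Real.rpow_mul hK.le,
      one_div_mul_cancel hpq.ne_zero, Real.rpow_one, one_div_mul_eq_div,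
      hpq.div_conj_eq_sub_one] at h
  calc K ^ (1 - p) = K ^ (1 - p) * 1 := (mul_one _).symm
    _ ≤ K ^ (1 - p) * (S * K ^ (p - 1)) := by gcongr
    _ = S := by rw [mul_left_comm, ← Real.rpow_add hK]; simp

lemma exists_sum_weight_mul_mul_eq_one_and_sum_weight_abs_rpow_eq (hpq : p.HolderConjugate q)
    (w v : ι → ℝ) (hK : 0 < ∑ k, w k * |v k| ^ q) :
    ∃ u : ι → ℝ, ∑ k, w k * u k * v k = 1 ∧
      ∑ k, w k * |u k| ^ p = (∑ k, w k * |v k| ^ q) ^ (1 - p) := by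
  set K := ∑ k, w k * |v k| ^ q
  refine ⟨fun k => K⁻¹ * (v k * |v k| ^ (q - 2)), ?_, ?_⟩
  · calc ∑ k, w k * (K⁻¹ * (v k * |v k| ^ (q - 2))) * v k
          = K⁻¹ * ∑ k, w k * (v k * (v k * |v k| ^ (q - 2))) := by
            rw [mul_sum]; exact sum_congr rfl fun k _ => by ring
      _ = 1 := by
            simp_rw [mul_mul_abs_rpow_sub_two _ hpq.symm.ne_zero]
            exact inv_mul_cancel₀ hK.ne'
  · calc ∑ k, w k * |K⁻¹ * (v k * |v k| ^ (q - 2))| ^ p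
          = K⁻¹ ^ p * ∑ k, w k * |v k| ^ q := by
            rw [mul_sum]
            refine sum_congr rfl fun k _ => ?_
            rw [abs_mul, abs_of_pos (inv_pos.2 hK), Real.mul_rpow (inv_pos.2 hK).le (abs_nonneg _),
              abs_mul_abs_rpow_sub_two_rpow _ hpq]
            ring
      _ = K ^ (1 - p) := by
            rw [Real.inv_rpow hK.le, Real.rpow_sub hK, Real.rpow_one, inv_mul_eq_div]

theorem inv_sInf_sum_weight_abs_rpow (hpq : p.HolderConjugate q) {w : ι → ℝ}
    (hw : ∀ k, 0 ≤ w k) (v : ι → ℝ) :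
    (sInf {e : ℝ | ∃ u : ι → ℝ, ∑ k, w k * u k * v k = 1 ∧ e = ∑ k, w k * |u k| ^ p})⁻¹ =
      (∑ k, w k * |v k| ^ q) ^ (p - 1) := by
  set K := ∑ k, w k * |v k| ^ q
  by_cases hK : 0 < K
  · have hleast : IsLeast
        {e : ℝ | ∃ u : ι → ℝ, ∑ k, w k * u k * v k = 1 ∧ e = ∑ k, w k * |u k| ^ p}
        (K ^ (1 - p)) := by
      obtain ⟨u, huv, hu⟩ := exists_sum_weight_mul_mul_eq_one_and_sum_weight_abs_rpow_eq hpq w v hK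
      refine ⟨⟨u, huv, hu.symm⟩, ?_⟩
      rintro e ⟨u, huv, rfl⟩
      exact rpow_one_sub_le_sum_weight_abs_rpow hpq hw huv
    rw [hleast.csInf_eq, ← Real.rpow_neg hK.le, neg_sub]
  · have hempty :
        {e : ℝ | ∃ u : ι → ℝ, ∑ k, w k * u k * v k = 1 ∧ e = ∑ k, w k * |u k| ^ p} = ∅ :=
      Set.eq_empty_of_forall_notMem fun e ⟨u, huv, _⟩ =>
        hK (sum_weight_abs_rpow_pos_of_sum_weight_mul_mul_eq_one hpq hw huv)
    have hK0 : K = 0 :=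
      le_antisymm (not_lt.1 hK) (sum_nonneg fun k _ => mul_nonneg (hw k) (by positivity))
    rw [hempty, Real.sInf_empty, _root_.inv_zero, hK0, Real.zero_rpow hpq.sub_one_ne_zero]

end WeightedHolder

namespace WGraph

variable {n m : ℕ} (G : WGraph n m)

lemma inc_row (ℓ : Fin m) : G.inc ℓ = Pi.single (G.s ℓ) 1 - Pi.single (G.t ℓ) 1 := by
  funext k
  by_cases hs : k = G.s ℓ <;> by_cases ht : k = G.t ℓ
  · exact absurd (hs ▸ ht) (G.s_ne_t ℓ)
  all_goals simp [inc, hs, ht, G.s_ne_t ℓ, (G.s_ne_t ℓ).symm]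

lemma inc_mulVec_apply (x : Fin n → ℝ) (ℓ : Fin m) : (G.inc *ᵥ x) ℓ = x (G.s ℓ) - x (G.t ℓ) := by
  rw [mulVec, inc_row, sub_dotProduct, single_dotProduct, single_dotProduct, one_mul, one_mul]

lemma inc_mulVec_const (c : ℝ) : G.inc *ᵥ (fun _ => c) = 0 := by
  funext ℓ
  rw [inc_mulVec_apply, sub_self, Pi.zero_apply]

lemma lap_transpose : G.lapᵀ = G.lap := by
  rw [lap, transpose_mul, transpose_mul, transpose_transpose, diagonal_transpose, Matrix.mul_assoc]

lemma dotProduct_lap_mulVec (v x : Fin n → ℝ) :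
    v ⬝ᵥ G.lap *ᵥ x = ∑ ℓ, G.w ℓ * (G.inc *ᵥ v) ℓ * (G.inc *ᵥ x) ℓ := by
  rw [lap, ← mulVec_mulVec, ← mulVec_mulVec, dotProduct_mulVec, vecMul_transpose]
  simp only [dotProduct, mulVec_diagonal]
  exact sum_congr rfl fun ℓ _ => by ring

lemma inc_mulVec_eq_zero_of_lap_mulVec_eq_zero {x : Fin n → ℝ} (h : G.lap *ᵥ x = 0) :
    G.inc *ᵥ x = 0 := by
  have hsum : ∑ ℓ, G.w ℓ * ((G.inc *ᵥ x) ℓ * (G.inc *ᵥ x) ℓ) = 0 := by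
    simp_rw [← mul_assoc]
    rw [← dotProduct_lap_mulVec, h, dotProduct_zero]
  funext ℓ
  have hterm := (sum_eq_zero_iff_of_nonneg fun ℓ _ =>
    mul_nonneg (G.w_pos ℓ).le (mul_self_nonneg ((G.inc *ᵥ x) ℓ))).1 hsum ℓ (mem_univ ℓ)
  rwa [mul_eq_zero, or_iff_right (G.w_pos ℓ).ne', mul_self_eq_zero] at hterm

lemma surjective_mulVecLin_inc (hG : G.Connected) (htree : m + 1 = n) :
    Function.Surjective G.inc.mulVecLin := by
  have hker : LinearMap.ker G.inc.mulVecLin = Submodule.span ℝ {fun _ => 1} := by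
    apply le_antisymm
    · intro x hx
      obtain ⟨c, hc⟩ := hG x hx
      rw [show x = c • fun _ => 1 from funext fun k => by simp [hc k]]
      exact Submodule.smul_mem _ _ (Submodule.mem_span_singleton_self _)
    · rw [Submodule.span_singleton_le_iff_mem, LinearMap.mem_ker, mulVecLin_apply]
      exact G.inc_mulVec_const 1
  have hone : (fun _ => 1 : Fin n → ℝ) ≠ 0 := fun h => one_ne_zero (congrFun h ⟨0, by omega⟩)
  have hrank := LinearMap.finrank_range_add_finrank_ker G.inc.mulVecLin
  rw [hker, finrank_span_singleton hone, Module.finrank_fin_fun] at hrank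
  rw [← LinearMap.range_eq_top]
  apply Submodule.eq_top_of_finrank_eq
  rw [Module.finrank_fin_fun]
  omega

lemma single_sub_single_dotProduct_eq_zero_of_lap_mulVec_eq_zero (hG : G.Connected)
    (i j : Fin n) {z : Fin n → ℝ} (hz : G.lap *ᵥ z = 0) :
    (Pi.single i 1 - Pi.single j 1) ⬝ᵥ z = 0 := by
  obtain ⟨c, hc⟩ := hG z (G.inc_mulVec_eq_zero_of_lap_mulVec_eq_zero hz)
  rw [sub_dotProduct, single_dotProduct, single_dotProduct, hc, hc, sub_self]

lemma sub_eq_sum_weight_mul_inc_mulVec_mul {i j : Fin n} {y : Fin n → ℝ}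
    (hy : G.lap *ᵥ y = Pi.single i 1 - Pi.single j 1) (x : Fin n → ℝ) :
    x i - x j = ∑ ℓ, G.w ℓ * (G.inc *ᵥ x) ℓ * (G.inc *ᵥ y) ℓ := by
  rw [← dotProduct_lap_mulVec, hy, dotProduct_sub, dotProduct_single, dotProduct_single,
    mul_one, mul_one]

lemma presistance_eq_inv_sInf (hC : Function.Surjective G.inc.mulVecLin) (p : ℝ)
    {i j : Fin n} {y : Fin n → ℝ} (hy : G.lap *ᵥ y = Pi.single i 1 - Pi.single j 1) :
    G.presistance p i j = (sInf {e : ℝ | ∃ u : Fin m → ℝ,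
      ∑ ℓ, G.w ℓ * u ℓ * (G.inc *ᵥ y) ℓ = 1 ∧ e = ∑ ℓ, G.w ℓ * |u ℓ| ^ p})⁻¹ := by
  rw [presistance]
  congr 2
  ext e
  constructor
  · rintro ⟨x, hx, rfl⟩
    exact ⟨G.inc *ᵥ x, by rwa [← G.sub_eq_sum_weight_mul_inc_mulVec_mul hy], rfl⟩
  · rintro ⟨u, hu, rfl⟩
    obtain ⟨x, rfl⟩ := hC u
    exact ⟨x, by rwa [G.sub_eq_sum_weight_mul_inc_mulVec_mul hy], rfl⟩

end WGraph

theorem presistance_tree_exact_general (n m : ℕ) (G : WGraph n m) (hG : G.Connected)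
    (htree : m + 1 = n)
    (p q : ℝ) (hp : 1 < p) (hpq : 1 / p + 1 / q = 1)
    (Lp : Matrix (Fin n) (Fin n) ℝ) (hLp : IsMoorePenrose G.lap Lp)
    (i j : Fin n) :
    G.presistance p i j =
      (G.gnorm q (Lp.mulVec (Pi.single i 1) - Lp.mulVec (Pi.single j 1))) ^ p := by
  have hpq' : p.HolderConjugate q :=
    Real.holderConjugate_iff.2 ⟨hp, by simpa only [one_div] using hpq⟩
  set y := Lp *ᵥ (Pi.single i 1 - Pi.single j 1)
  have hy : G.lap *ᵥ y = Pi.single i 1 - Pi.single j 1 := hLp.mulVec_mulVec_eq_self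
    G.lap_transpose fun _ => G.single_sub_single_dotProduct_eq_zero_of_lap_mulVec_eq_zero hG i j
  rw [G.presistance_eq_inv_sInf (G.surjective_mulVecLin_inc hG htree) p hy,
    inv_sInf_sum_weight_abs_rpow hpq' fun ℓ => (G.w_pos ℓ).le, WGraph.gnorm, ← mulVec_sub,
    ← Real.rpow_mul (sum_nonneg fun ℓ _ => mul_nonneg (G.w_pos ℓ).le (by positivity)),
    one_div_mul_eq_div, hpq'.div_conj_eq_sub_one]

/-- **Theorem (tree case).** If `G` is a weighted tree (connected and `m = n − 1`)
and `p, q > 1` with `1/p + 1/q = 1`, then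
`r_{G,p}(i,j) = ‖L⁺e_i − L⁺e_j‖_{G,q}^p` for all vertices `i, j`. -/
theorem presistance_tree_exact (n m : ℕ) (G : WGraph n m) (hG : G.Connected)
    (htree : m + 1 = n)
    (p q : ℝ) (hp : 1 < p) (hq : 1 < q) (hpq : 1 / p + 1 / q = 1)
    (Lp : Matrix (Fin n) (Fin n) ℝ) (hLp : IsMoorePenrose G.lap Lp)
    (i j : Fin n) :
    G.presistance p i j =
      (G.gnorm q (Lp.mulVec (Pi.single i 1) - Lp.mulVec (Pi.single j 1))) ^ p :=
  presistance_tree_exact_general n m G hG htree p q hp hpq Lp hLp i j
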